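/- arXiv:2309.05544 — 3 statements merged into one kernel-verified Lean document; each statement's English description precedes it below -/
import Mathlib

section
/- Let 0 < x < 1 and s ≤ 0 be real numbers. Then the cubic polynomial q(b) := (1−x)² + (1−x)(2+2x−sx)b − (1+x)(2(1−x)−sx)b² − (1+x)²b³ has exactly one root b in (0, ∞). -/
/-!
Writing the cubic as `b * (A / b + B - C b - D b²)` with `A > 0`, `C ≥ 0`, `D > 0`, its positive
roots are the zeros of a strictly decreasing function on `(0, ∞)`, so there is at most one; and
there is one by the intermediate value theorem, since the cubic is `A > 0` at `0` and tends to
`-∞`. Here `C = (1 + x)(2(1 - x) - s x) ≥ 0` because `x < 1` and `s ≤ 0`.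
-/

open Set

section Cubic

variable (A B C D : ℝ)

lemma strictAntiOn_cubic_div (hA : 0 < A) (hC : 0 ≤ C) (hD : 0 < D) :
    StrictAntiOn (fun b : ℝ => A / b + B - C * b - D * b ^ 2) (Ioi 0) := by
  intro b₁ hb₁ b₂ _ hlt
  have hb₁ : (0 : ℝ) < b₁ := hb₁
  have hA_div : A / b₂ < A / b₁ := div_lt_div_of_pos_left hA hb₁ hlt
  have hC_mul : C * b₁ ≤ C * b₂ := mul_le_mul_of_nonneg_left hlt.le hC
  have hD_mul : D * b₁ ^ 2 < D * b₂ ^ 2 :=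
    mul_lt_mul_of_pos_left (pow_lt_pow_left₀ hlt hb₁.le two_ne_zero) hD
  dsimp only
  linarith

lemma eq_of_cubic_eq_zero (hA : 0 < A) (hC : 0 ≤ C) (hD : 0 < D) {b₁ b₂ : ℝ}
    (hb₁ : 0 < b₁) (hb₂ : 0 < b₂) (h₁ : A + B * b₁ - C * b₁ ^ 2 - D * b₁ ^ 3 = 0)
    (h₂ : A + B * b₂ - C * b₂ ^ 2 - D * b₂ ^ 3 = 0) : b₁ = b₂ := by
  have factor : ∀ b : ℝ, 0 < b →
      A + B * b - C * b ^ 2 - D * b ^ 3 = b * (A / b + B - C * b - D * b ^ 2) := by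
    intro b hb
    field_simp
  rw [factor b₁ hb₁, mul_eq_zero, or_iff_right hb₁.ne'] at h₁
  rw [factor b₂ hb₂, mul_eq_zero, or_iff_right hb₂.ne'] at h₂
  exact (strictAntiOn_cubic_div A B C D hA hC hD).injOn hb₁ hb₂ (h₁.trans h₂.symm)

lemma exists_pos_cubic_eq_zero (hA : 0 < A) (hC : 0 ≤ C) (hD : 0 < D) :
    ∃ b : ℝ, 0 < b ∧ A + B * b - C * b ^ 2 - D * b ^ 3 = 0 := by
  set f : ℝ → ℝ := fun b => A + B * b - C * b ^ 2 - D * b ^ 3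
  set M : ℝ := 1 + (A + |B|) / D
  have hM : D * (M - 1) = A + |B| := by simp only [M]; field_simp; ring
  have hM_one : 1 ≤ M := le_add_of_nonneg_right (by positivity)
  -- `f M ≤ (A + |B|) M - D M³ = M (D (M - 1) - D M²) < 0`
  have hfM : f M < 0 := by
    have hB : B * M ≤ |B| * M := mul_le_mul_of_nonneg_right (le_abs_self B) (by linarith)
    have hCM : 0 ≤ C * M ^ 2 := by positivity
    have hAM : A ≤ A * M := le_mul_of_one_le_right hA.le hM_one
    have hcube : (A + |B|) * M < D * M ^ 3 := by
      rw [← hM]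
      have : M - 1 < M ^ 2 := by nlinarith
      nlinarith [mul_lt_mul_of_pos_left this (mul_pos hD (by linarith : (0 : ℝ) < M))]
    simp only [f]
    nlinarith
  have hf0 : 0 < f 0 := by simpa [f] using hA
  obtain ⟨b, hb, hfb⟩ : 0 ∈ f '' Ioo 0 M :=
    intermediate_value_Ioo' (by linarith) (by fun_prop) ⟨hfM, hf0⟩
  exact ⟨b, hb.1, hfb⟩

theorem existsUnique_pos_cubic_eq_zero (hA : 0 < A) (hC : 0 ≤ C) (hD : 0 < D) :
    ∃! b : ℝ, 0 < b ∧ A + B * b - C * b ^ 2 - D * b ^ 3 = 0 := by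
  obtain ⟨b, hb, hroot⟩ := exists_pos_cubic_eq_zero A B C D hA hC hD
  exact ⟨b, ⟨hb, hroot⟩, fun b' ⟨hb', hroot'⟩ =>
    eq_of_cubic_eq_zero A B C D hA hC hD hb' hb hroot' hroot⟩

end Cubic

theorem stmt5 (s x : ℝ) (hx0 : 0 < x) (hx1 : x < 1) (hs : s ≤ 0) :
    ∃! b : ℝ, 0 < b ∧
      (1 - x)^2 + (1 - x)*(2 + 2*x - s*x)*b - (1 + x)*(2*(1 - x) - s*x)*b^2
        - (1 + x)^2*b^3 = 0 := by
  have hsx : s * x ≤ 0 := mul_nonpos_of_nonpos_of_nonneg hs hx0.le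
  have hA : 0 < (1 - x) ^ 2 := pow_pos (sub_pos.2 hx1) 2
  have hC : 0 ≤ (1 + x) * (2 * (1 - x) - s * x) := by nlinarith
  have hD : 0 < (1 + x) ^ 2 := by positivity
  exact existsUnique_pos_cubic_eq_zero _ _ _ _ hA hC hD
end

section
/- Let p be a real polynomial of degree at most 3. If p(−1) > 0, p(1) > 0, p'(−1) > 0 and p''(−1) > 0, then p(z) > 0 for all z ∈ [−1, 1]. -/
/-!
Expanding `p` around `-1` gives `p z = q (z + 1)` for a cubic `q` whose coefficients of degree `< 3`,
namely `p(-1)`, `p'(-1)` and `p''(-1)/2`, are positive. For such a `q` the lower-order terms decay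
more slowly than `t³` as `t` decreases from `T`, so `t³ q(T) ≤ T³ q(t)` on `[0, T]`; with `T = 2`
the value `q(2) = p(1) > 0` propagates to all of `(0, 2]`.
-/

namespace Polynomial

theorem two_mul_taylor_coeff_two {R : Type*} [CommSemiring R] (r : R) (f : R[X]) :
    2 * (taylor r f).coeff 2 = (derivative (derivative f)).eval r := by
  have h := congr_fun (factorial_smul_hasseDeriv (R := R) 2) f
  simp only [LinearMap.smul_apply, Nat.factorial_two, Function.iterate_succ, Function.iterate_zero,
    Function.comp_apply, id] at h
  rw [taylor_coeff, ← h, eval_smul, nsmul_eq_mul, Nat.cast_ofNat]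

-- Termwise, `T ^ n * t ^ k - t ^ n * T ^ k = (t T) ^ k (T ^ (n - k) - t ^ (n - k)) ≥ 0`.
theorem pow_mul_eval_le_pow_mul_eval {R : Type*} [CommRing R] [LinearOrder R] [IsStrictOrderedRing R]
    {q : R[X]} {n : ℕ} (hdeg : q.natDegree ≤ n) (hcoeff : ∀ k < n, 0 ≤ q.coeff k)
    {t T : R} (ht : 0 ≤ t) (htT : t ≤ T) :
    t ^ n * q.eval T ≤ T ^ n * q.eval t := by
  have hlt : q.natDegree < n + 1 := Nat.lt_succ_of_le hdeg
  rw [eval_eq_sum_range' hlt, eval_eq_sum_range' hlt, Finset.mul_sum, Finset.mul_sum]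
  refine Finset.sum_le_sum fun k hk => ?_
  obtain ⟨m, rfl⟩ : ∃ m, n = k + m :=
    Nat.exists_eq_add_of_le (Nat.lt_succ_iff.mp (Finset.mem_range.mp hk))
  rcases m.eq_zero_or_pos with rfl | hm
  · exact le_of_eq (by ring)
  · have hpow : t ^ m * T ^ k * t ^ k ≤ T ^ m * T ^ k * t ^ k := by
      have hT : 0 ≤ T := ht.trans htT
      gcongr
    calc t ^ (k + m) * (q.coeff k * T ^ k) = q.coeff k * (t ^ m * T ^ k * t ^ k) := by ring
      _ ≤ q.coeff k * (T ^ m * T ^ k * t ^ k) :=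
        mul_le_mul_of_nonneg_left hpow (hcoeff k (by omega))
      _ = T ^ (k + m) * (q.coeff k * t ^ k) := by ring

theorem eval_pos_of_coeff_nonneg {R : Type*} [CommRing R] [LinearOrder R] [IsStrictOrderedRing R]
    {q : R[X]} {n : ℕ} (hdeg : q.natDegree ≤ n) (hcoeff : ∀ k < n, 0 ≤ q.coeff k)
    (hzero : 0 < q.coeff 0) {t T : R} (ht : 0 ≤ t) (htT : t ≤ T) (hT : 0 < q.eval T) :
    0 < q.eval t := by
  rcases ht.eq_or_lt with rfl | ht
  · rwa [← coeff_zero_eq_eval_zero]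
  · have hle := pow_mul_eval_le_pow_mul_eval hdeg hcoeff ht.le htT
    exact pos_of_mul_pos_right ((mul_pos (pow_pos ht n) hT).trans_le hle)
      (pow_nonneg (ht.le.trans htT) n)

end Polynomial

open Polynomial in
theorem stmt13 (p : Polynomial ℝ) (hdeg : p.degree ≤ 3)
    (h1 : 0 < p.eval (-1)) (h2 : 0 < p.eval 1)
    (h3 : 0 < (derivative p).eval (-1))
    (h4 : 0 < (derivative (derivative p)).eval (-1)) :
    ∀ z ∈ Set.Icc (-1 : ℝ) 1, 0 < p.eval z := by
  rintro z ⟨hz1, hz2⟩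
  set q := taylor (-1) p
  have hq : ∀ t, q.eval t = p.eval (t - 1) := fun t => by rw [taylor_eval, sub_eq_add_neg]
  have hqdeg : q.natDegree ≤ 3 := by rw [natDegree_taylor]; exact natDegree_le_of_degree_le hdeg
  have hcoeff : ∀ k < 3, 0 ≤ q.coeff k := by
    intro k hk
    interval_cases k
    · exact (taylor_coeff_zero (-1) p ▸ h1).le
    · exact (taylor_coeff_one (-1) p ▸ h3).le
    · linarith [two_mul_taylor_coeff_two (-1) p]
  have hpos := eval_pos_of_coeff_nonneg hqdeg hcoeff (taylor_coeff_zero (-1) p ▸ h1)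
    (by linarith : (0 : ℝ) ≤ z + 1) (by linarith : z + 1 ≤ 2) (by norm_num [hq, h2])
  rwa [hq, add_sub_cancel_right] at hpos
end

section
/- Let x₁, x₂, s₁, s₂ be real numbers with |x₁| < 1 and |x₂| < 1, and let h(c) be the degree-5 polynomial defined by h(c) = (3x₁x₂(s₁x₂+s₂x₁) − s₁x₁ − s₂x₂ + 3(3x₁²x₂² − x₁² + 2x₁x₂ − x₂² + 1))c⁵ + (s₁x₁² + s₂x₂² − 3(s₁+s₂)x₁²x₂² − 4(s₁+s₂)x₁x₂ − 6(x₁+x₂)(4x₁x₂+1))c⁴ + 4(((s₁x₁+s₂x₂) − (s₁x₂+s₂x₁))x₁x₂ + s₁x₁ + s₂x₂ + 3x₁x₂(x₁x₂+5) + 6(x₁²+x₂²))c³ + 4((s₁+s₂)(x₁x₂+1)x₁x₂ − s₁x₁² − s₂x₂² − 3(x₁+x₂)(2x₁x₂+3))c² + ((s₁x₂+s₂x₁)x₁x₂ − (s₁x₁+s₂x₂)(4x₁x₂+3) + 3(x₁²x₂² + x₁² + x₂² + 10x₁x₂ + 7))c + 3(s₁x₁² + s₂x₂²) − (s₁+s₂)x₁²x₂²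 − 6(x₁+x₂). Then h(1) = 24(1−x₁)²(1−x₂)², h(−1) = −24(1+x₁)²(1+x₂)², and consequently h has a root c ∈ (−1, 1). -/
theorem stmt15 (x₁ x₂ s₁ s₂ : ℝ) (hx₁ : |x₁| < 1) (hx₂ : |x₂| < 1) :
    let h : ℝ → ℝ := fun c =>
      (3*x₁*x₂*(s₁*x₂ + s₂*x₁) - s₁*x₁ - s₂*x₂
        + 3*(3*x₁^2*x₂^2 - x₁^2 + 2*x₁*x₂ - x₂^2 + 1))*c^5
      + (s₁*x₁^2 + s₂*x₂^2 - 3*(s₁ + s₂)*x₁^2*x₂^2 - 4*(s₁ + s₂)*x₁*x₂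
        - 6*(x₁ + x₂)*(4*x₁*x₂ + 1))*c^4
      + 4*(((s₁*x₁ + s₂*x₂) - (s₁*x₂ + s₂*x₁))*x₁*x₂ + s₁*x₁ + s₂*x₂
        + 3*x₁*x₂*(x₁*x₂ + 5) + 6*(x₁^2 + x₂^2))*c^3
      + 4*((s₁ + s₂)*(x₁*x₂ + 1)*x₁*x₂ - s₁*x₁^2 - s₂*x₂^2
        - 3*(x₁ + x₂)*(2*x₁*x₂ + 3))*c^2
      + ((s₁*x₂ + s₂*x₁)*x₁*x₂ - (s₁*x₁ + s₂*x₂)*(4*x₁*x₂ + 3)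
        + 3*(x₁^2*x₂^2 + x₁^2 + x₂^2 + 10*x₁*x₂ + 7))*c
      + 3*(s₁*x₁^2 + s₂*x₂^2) - (s₁ + s₂)*x₁^2*x₂^2 - 6*(x₁ + x₂)
    h 1 = 24*(1 - x₁)^2*(1 - x₂)^2 ∧
    h (-1) = -(24*(1 + x₁)^2*(1 + x₂)^2) ∧
    ∃ c ∈ Set.Ioo (-1 : ℝ) 1, h c = 0 := by
  intro h
  obtain ⟨hx1l, hx1r⟩ := abs_lt.mp hx₁
  obtain ⟨hx2l, hx2r⟩ := abs_lt.mp hx₂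
  have h1 : h 1 = 24*(1 - x₁)^2*(1 - x₂)^2 := by simp only [h]; ring
  have hm1 : h (-1) = -(24*(1 + x₁)^2*(1 + x₂)^2) := by simp only [h]; ring
  refine ⟨h1, hm1, ?_⟩
  have hc : ContinuousOn h (Set.Icc (-1 : ℝ) 1) := by
    apply Continuous.continuousOn; simp only [h]; continuity
  have hneg : h (-1) < 0 := by
    rw [hm1]
    have e1 : (0:ℝ) < 1 + x₁ := by linarith
    have e2 : (0:ℝ) < 1 + x₂ := by linarith
    have : (0:ℝ) < 24*(1 + x₁)^2*(1 + x₂)^2 := by positivity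
    linarith
  have hpos : (0:ℝ) < h 1 := by
    rw [h1]
    have e1 : (0:ℝ) < 1 - x₁ := by linarith
    have e2 : (0:ℝ) < 1 - x₂ := by linarith
    positivity
  have := intermediate_value_Ioo (by norm_num : (-1:ℝ) ≤ 1) hc
  have hmem : (0:ℝ) ∈ Set.Ioo (h (-1)) (h 1) := ⟨hneg, hpos⟩
  obtain ⟨c, hc1, hc2⟩ := this hmem
  exact ⟨c, hc1, hc2⟩
end
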